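/- When there are at most two distinct valuation types among the agents and m is a multiple of n, there exists a balanced allocation that is both EF1 and fractionally Pareto optimal. -/

import Mathlib

open Finset

def IsBalanced (n m k : ℕ) (A : Fin n → Finset (Fin m)) : Prop :=
  (∀ j : Fin m, ∃! i : Fin n, j ∈ A i) ∧ ∀ i : Fin n, (A i).card = k

def IsFracBalanced (n m k : ℕ) (x : Fin n → Fin m → ℝ) : Prop :=
  (∀ i j, 0 ≤ x i j) ∧ (∀ i : Fin n, ∑ j : Fin m, x i j = (k : ℝ)) ∧
    (∀ j : Fin m, ∑ i : Fin n, x i j = 1)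

def IsFPO (n m k : ℕ) (v : Fin n → Fin m → ℝ) (A : Fin n → Finset (Fin m)) : Prop :=
  ¬ ∃ x : Fin n → Fin m → ℝ, IsFracBalanced n m k x ∧
    (∀ i : Fin n, ∑ j ∈ A i, v i j ≤ ∑ j : Fin m, v i j * x i j) ∧
    (∃ i : Fin n, ∑ j ∈ A i, v i j < ∑ j : Fin m, v i j * x i j)

def IsEF1 (n m : ℕ) (v : Fin n → Fin m → ℝ) (A : Fin n → Finset (Fin m)) : Prop :=
  ∀ i i' : Fin n, A i' = ∅ ∨
    ∃ j ∈ A i', ∑ j' ∈ (A i').erase j, v i j' ≤ ∑ j' ∈ A i, v i j'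


/-!
Type `0` receives a set `P` of `n₀ k` goods and type `1` its complement, and within each type
the goods are dealt out by round robin, which is EF1 among agents of the same type. `P` is
kept a top set for `u₀ - r u₁` with `r > 0`: then `P` maximizes the welfare `u₀(P) + r u₁(Pᶜ)`
even over fractional splits (a fractional knapsack), so the allocation is fPO. Start with a set
`P` maximizing `u₀`, so type `0` envies nobody. While type `1` is not EF1 towards type `0`, raise
`r` until some `p ∈ P`, `q ∉ P` become tight and exchange them. Comparing the order statistics
of the round-robin bundles before and after shows that type `0` stays EF1 towards type `1`, and
every exchange lowers `u₁(P)`, so the process stops at an allocation that is EF1 both ways.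
-/

section OrderStatistics

variable {α : Type*}

noncomputable def sortedByValue (w : α → ℝ) (S : Finset α) : List α :=
  S.toList.mergeSort fun x y => decide (w y ≤ w x)

noncomputable def orderStat (w : α → ℝ) (S : Finset α) (i : ℕ) : ℝ :=
  ((sortedByValue w S).map w).getD i 0

variable {w : α → ℝ} {S : Finset α} {s k : ℕ}

lemma mem_sortedByValue {z : α} : z ∈ sortedByValue w S ↔ z ∈ S := by
  rw [sortedByValue, (List.mergeSort_perm _ _).mem_iff, mem_toList]

lemma nodup_sortedByValue : (sortedByValue w S).Nodup :=
  (List.mergeSort_perm _ _).nodup_iff.2 S.nodup_toList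

lemma length_sortedByValue : (sortedByValue w S).length = S.card := by
  rw [sortedByValue, (List.mergeSort_perm _ _).length_eq, length_toList]

lemma pairwise_sortedByValue : (sortedByValue w S).Pairwise fun x y => w y ≤ w x := by
  have := List.pairwise_mergeSort (le := fun x y => decide (w y ≤ w x))
    (fun a b c hab hbc => by simp only [decide_eq_true_eq] at *; linarith)
    (fun a b => by simpa using le_total (w b) (w a)) S.toList
  simpa [sortedByValue] using this

lemma orderStat_of_lt {i : ℕ} (hi : i < (sortedByValue w S).length) :
    orderStat w S i = w (sortedByValue w S)[i] := by
  simp [orderStat, List.getD_eq_getElem?_getD, hi]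

lemma orderStat_le_of_le {i j : ℕ} (hij : i ≤ j) (hj : j < S.card) :
    orderStat w S j ≤ orderStat w S i := by
  rw [← length_sortedByValue (w := w)] at hj
  rw [orderStat_of_lt hj, orderStat_of_lt (hij.trans_lt hj)]
  rcases hij.eq_or_lt with rfl | hlt
  · exact le_rfl
  · exact List.pairwise_iff_getElem.1 pairwise_sortedByValue i j _ hj hlt

lemma orderStat_nonneg (hw : ∀ z, 0 ≤ w z) (S : Finset α) (i : ℕ) : 0 ≤ orderStat w S i := by
  rcases lt_or_ge i (sortedByValue w S).length with h | h
  · rw [orderStat_of_lt h]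
    exact hw _
  · simp [orderStat, List.getD_eq_getElem?_getD, h]

lemma add_mul_lt_mul_of_lt {a s c k : ℕ} (ha : a < s) (hc : c < k) : a + s * c < s * k := by
  nlinarith

/-- The value of the last agent's bundle, the least valuable one. -/
noncomputable def rrFloor (w : α → ℝ) (S : Finset α) (s k : ℕ) : ℝ :=
  ∑ c ∈ range k, orderStat w S (s - 1 + s * c)

/-- The value of the first agent's bundle without its first pick: every bundle minus its first
pick is worth at most this. -/
noncomputable def rrCeil (w : α → ℝ) (S : Finset α) (s k : ℕ) : ℝ :=
  ∑ c ∈ range (k - 1), orderStat w S (s * (c + 1))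

lemma rrCeil_le_rrFloor_of_shift {S' : Finset α} (hw : ∀ z, 0 ≤ w z) (hs : 0 < s)
    (hS : S.card = s * k) (h : ∀ i, i + 1 < S.card → orderStat w S (i + 1) ≤ orderStat w S' i) :
    rrCeil w S s k ≤ rrFloor w S' s k := by
  calc rrCeil w S s k ≤ ∑ c ∈ range (k - 1), orderStat w S' (s - 1 + s * c) := by
        refine sum_le_sum fun c hc => ?_
        have hc := mem_range.1 hc
        have hsc : s - 1 + s * c + 1 = s * (c + 1) := by rw [Nat.mul_succ]; omega
        have hlt : s * (c + 1) < S.card := by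
          simpa [hS] using add_mul_lt_mul_of_lt hs (show c + 1 < k by omega)
        have := h (s - 1 + s * c) (hsc ▸ hlt)
        rwa [hsc] at this
    _ ≤ rrFloor w S' s k :=
        sum_le_sum_of_subset_of_nonneg (range_subset_range.2 (by omega))
          fun _ _ _ => orderStat_nonneg hw _ _

lemma rrCeil_le_rrFloor (hw : ∀ z, 0 ≤ w z) (hs : 0 < s) (hS : S.card = s * k) :
    rrCeil w S s k ≤ rrFloor w S s k :=
  rrCeil_le_rrFloor_of_shift hw hs hS fun i hi => orderStat_le_of_le i.le_succ hi

variable [DecidableEq α]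

noncomputable def valueRank (w : α → ℝ) (S : Finset α) (z : α) : ℕ :=
  (sortedByValue w S).idxOf z

lemma valueRank_lt {z : α} (hz : z ∈ S) : valueRank w S z < S.card := by
  rw [← length_sortedByValue]
  exact List.idxOf_lt_length_of_mem (mem_sortedByValue.2 hz)

lemma orderStat_valueRank {z : α} (hz : z ∈ S) : orderStat w S (valueRank w S z) = w z := by
  rw [orderStat_of_lt (by rw [length_sortedByValue]; exact valueRank_lt hz)]
  exact congrArg w (List.getElem_idxOf _)

lemma valueRank_injOn : Set.InjOn (valueRank w S) S := fun _ hx _ _ h =>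
  (List.idxOf_inj (mem_sortedByValue.2 hx)).1 h

lemma exists_valueRank_eq {i : ℕ} (hi : i < S.card) : ∃ z ∈ S, valueRank w S z = i := by
  rw [← length_sortedByValue (w := w)] at hi
  exact ⟨_, mem_sortedByValue.1 (List.getElem_mem hi), nodup_sortedByValue.idxOf_getElem i hi⟩

lemma card_filter_le_eq (t : ℝ) :
    #{z ∈ S | t ≤ w z} = #{i ∈ range S.card | t ≤ orderStat w S i} := by
  refine card_nbij (valueRank w S) (fun z hz => ?_)
    (valueRank_injOn.mono fun _ hz => (mem_filter.1 hz).1) ?_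
  · simp only [coe_filter, Set.mem_ofPred_eq, mem_range] at hz ⊢
    exact ⟨valueRank_lt hz.1, (orderStat_valueRank hz.1).symm ▸ hz.2⟩
  · intro i hi
    simp only [coe_filter, Set.mem_ofPred_eq, mem_range] at hi
    obtain ⟨z, hz, rfl⟩ := exists_valueRank_eq (w := w) hi.1
    exact ⟨z, by simpa [hz, orderStat_valueRank hz] using hi.2, rfl⟩

lemma le_orderStat_iff {i : ℕ} (hi : i < S.card) (t : ℝ) :
    t ≤ orderStat w S i ↔ i < #{z ∈ S | t ≤ w z} := by
  rw [card_filter_le_eq]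
  constructor
  · intro h
    calc i < #(range (i + 1)) := by simp
      _ ≤ _ := card_le_card fun j hj => by
        simp only [mem_range, mem_filter] at hj ⊢
        exact ⟨by omega, h.trans (orderStat_le_of_le (by omega) hi)⟩
  · intro h
    by_contra! hlt
    have : #{j ∈ range S.card | t ≤ orderStat w S j} ≤ #(range i) :=
      card_le_card fun j hj => by
        simp only [mem_range, mem_filter] at hj ⊢
        by_contra hij
        exact absurd (hj.2.trans (orderStat_le_of_le (not_lt.1 hij) hj.1)) (not_le.2 hlt)
    rw [card_range] at this
    omega

lemma orderStat_succ_le_of_card_sdiff_le_one {S' : Finset α} (hcard : S'.card = S.card)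
    (hdiff : (S \ S').card ≤ 1) {i : ℕ} (hi : i + 1 < S.card) :
    orderStat w S (i + 1) ≤ orderStat w S' i := by
  set t := orderStat w S (i + 1)
  have hS := (le_orderStat_iff hi t).1 le_rfl
  refine (le_orderStat_iff (by omega) t).2 ?_
  have : #{z ∈ S | t ≤ w z} ≤ #{z ∈ S' | t ≤ w z} + #(S \ S') :=
    calc _ ≤ #({z ∈ S' | t ≤ w z} ∪ (S \ S')) := card_le_card fun z hz => by
          simp only [mem_filter, mem_union, mem_sdiff] at hz ⊢
          tauto
      _ ≤ _ := card_union_le _ _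
  omega

end OrderStatistics

section RoundRobin

variable {α : Type*} [DecidableEq α] {w : α → ℝ} {S : Finset α} {s k : ℕ}

/-- Round robin among `s` agents over the goods `S`, picking in decreasing order of `w`:
agent `a` receives the goods of rank `a, a + s, a + 2s, …`. -/
noncomputable def rrBundle (w : α → ℝ) (S : Finset α) (s a : ℕ) : Finset α :=
  {z ∈ S | valueRank w S z % s = a}

lemma sum_rrBundle_valueRank {M : Type*} [AddCommMonoid M] (hS : S.card = s * k) {a : ℕ}
    (ha : a < s) (f : ℕ → M) :
    ∑ z ∈ rrBundle w S s a, f (valueRank w S z) = ∑ c ∈ range k, f (a + s * c) := by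
  have hmod : ∀ z ∈ rrBundle w S s a, a + s * (valueRank w S z / s) = valueRank w S z :=
    fun z hz => (mem_filter.1 hz).2 ▸ Nat.mod_add_div _ _
  refine sum_nbij (fun z => valueRank w S z / s) (fun z hz => ?_) (fun z hz z' hz' h => ?_)
    (fun c hc => ?_) (fun z hz => by rw [hmod z hz])
  · have := valueRank_lt (w := w) (mem_filter.1 hz).1
    rw [mem_range, Nat.div_lt_iff_lt_mul (by omega)]
    rw [hS] at this
    linarith [Nat.mul_comm s k]
  · refine valueRank_injOn (w := w) (mem_filter.1 hz).1 (mem_filter.1 hz').1 ?_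
    rw [← hmod z hz, ← hmod z' hz']
    exact congrArg (a + s * ·) h
  · have hc : a + s * c < S.card := hS ▸ add_mul_lt_mul_of_lt ha (mem_range.1 hc)
    obtain ⟨z, hz, hrank⟩ := exists_valueRank_eq (w := w) hc
    refine ⟨z, by simp [rrBundle, hz, hrank, Nat.add_mul_mod_self_left, Nat.mod_eq_of_lt ha], ?_⟩
    simp [hrank, Nat.add_mul_div_left _ _ (show 0 < s by omega), Nat.div_eq_of_lt ha]

lemma card_rrBundle (hS : S.card = s * k) {a : ℕ} (ha : a < s) : (rrBundle w S s a).card = k := by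
  simpa using sum_rrBundle_valueRank (w := w) (M := ℕ) hS ha fun _ => 1

lemma sum_rrBundle (hS : S.card = s * k) {a : ℕ} (ha : a < s) :
    ∑ z ∈ rrBundle w S s a, w z = ∑ c ∈ range k, orderStat w S (a + s * c) := by
  rw [← sum_rrBundle_valueRank hS ha]
  exact sum_congr rfl fun z hz => (orderStat_valueRank (mem_filter.1 hz).1).symm

lemma sum_sum_rrBundle {M : Type*} [AddCommMonoid M] (hS : S.card = s * k) (f : α → M) :
    ∑ a ∈ range s, ∑ z ∈ rrBundle w S s a, f z = ∑ z ∈ S, f z := by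
  rcases s.eq_zero_or_pos with rfl | hs
  · simp_all
  · exact sum_fiberwise_of_maps_to (fun z _ => mem_range.2 (Nat.mod_lt _ hs)) f

lemma rrFloor_le_sum_rrBundle (hS : S.card = s * k) {a : ℕ} (ha : a < s) :
    rrFloor w S s k ≤ ∑ z ∈ rrBundle w S s a, w z := by
  rw [sum_rrBundle hS ha]
  exact sum_le_sum fun c hc => orderStat_le_of_le (by omega)
    (hS ▸ add_mul_lt_mul_of_lt (Nat.sub_one_lt_of_lt ha) (mem_range.1 hc))

lemma exists_mem_rrBundle_sum_erase_le_rrCeil (hS : S.card = s * k) {a : ℕ} (ha : a < s)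
    (hk : 0 < k) :
    ∃ j ∈ rrBundle w S s a, ∑ z ∈ (rrBundle w S s a).erase j, w z ≤ rrCeil w S s k := by
  have ha' : a < S.card := by simpa [hS] using add_mul_lt_mul_of_lt ha hk
  obtain ⟨j, hj, hrank⟩ := exists_valueRank_eq (w := w) ha'
  have hjB : j ∈ rrBundle w S s a := by simp [rrBundle, hj, hrank, Nat.mod_eq_of_lt ha]
  refine ⟨j, hjB, ?_⟩
  obtain ⟨k, rfl⟩ : ∃ k', k = k' + 1 := ⟨k - 1, by omega⟩
  rw [sum_erase_eq_sub hjB, sum_rrBundle hS ha, sum_range_succ',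
    ← orderStat_valueRank (w := w) hj, hrank, rrCeil, Nat.add_sub_cancel]
  simp only [mul_zero, add_zero, add_sub_cancel_right]
  exact sum_le_sum fun c hc => orderStat_le_of_le (by nlinarith)
    (hS ▸ add_mul_lt_mul_of_lt ha (Nat.succ_lt_succ (mem_range.1 hc)))

lemma rrCeil_le_rrFloor_of_card_sdiff_le_one {S' : Finset α} (hw : ∀ z, 0 ≤ w z) (hs : 0 < s)
    (hS : S.card = s * k) (hcard : S'.card = S.card) (hdiff : (S \ S').card ≤ 1) :
    rrCeil w S s k ≤ rrFloor w S' s k :=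
  rrCeil_le_rrFloor_of_shift hw hs hS fun _ hi =>
    orderStat_succ_le_of_card_sdiff_le_one hcard hdiff hi

end RoundRobin

section EnvyFreeness

variable {α : Type*} [DecidableEq α]

def EnvyFreeUpToOne (w : α → ℝ) (A B : Finset α) : Prop :=
  B = ∅ ∨ ∃ j ∈ B, ∑ z ∈ B.erase j, w z ≤ ∑ z ∈ A, w z

lemma envyFreeUpToOne_of_forall_le {w : α → ℝ} {A B : Finset α} (hw : ∀ z ∈ A, 0 ≤ w z)
    (hcard : B.card ≤ A.card + 1) (h : ∀ x ∈ B, ∀ y ∈ A, w x ≤ w y) :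
    EnvyFreeUpToOne w A B := by
  rcases B.eq_empty_or_nonempty with hB | ⟨j, hj⟩
  · exact Or.inl hB
  refine Or.inr ⟨j, hj, ?_⟩
  have hcard' : #(B.erase j) ≤ #A := by rw [card_erase_of_mem hj]; omega
  rcases A.eq_empty_or_nonempty with rfl | hA
  · simp [card_eq_zero.1 (Nat.le_zero.1 hcard')]
  have hmin : 0 ≤ A.inf' hA w := (le_inf'_iff _ _).2 hw
  calc ∑ z ∈ B.erase j, w z ≤ #(B.erase j) • A.inf' hA w :=
        sum_le_card_nsmul _ _ _ fun x hx => (le_inf'_iff _ _).2 (h x (mem_of_mem_erase hx))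
    _ ≤ #A • A.inf' hA w := nsmul_le_nsmul_left hmin hcard'
    _ ≤ ∑ z ∈ A, w z := card_nsmul_le_sum _ _ _ fun y hy => inf'_le _ hy

def RoundRobinEF1 (w w' : α → ℝ) (S S' : Finset α) (s s' : ℕ) : Prop :=
  ∀ a < s, ∀ b < s', EnvyFreeUpToOne w (rrBundle w S s a) (rrBundle w' S' s' b)

variable {w w' : α → ℝ} {S S' : Finset α} {s s' k : ℕ}

lemma RoundRobinEF1.of_forall_le (hw : ∀ z, 0 ≤ w z) (hS : S.card = s * k)
    (hS' : S'.card = s' * k) (h : ∀ x ∈ S', ∀ y ∈ S, w x ≤ w y) :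
    RoundRobinEF1 w w' S S' s s' := fun a ha b hb =>
  envyFreeUpToOne_of_forall_le (fun z _ => hw z)
    (by rw [card_rrBundle hS ha, card_rrBundle hS' hb]; omega)
    fun x hx y hy => h x (mem_filter.1 hx).1 y (mem_filter.1 hy).1

lemma RoundRobinEF1.of_le (hS : S.card = s * k) (hS' : S'.card = s' * k) {μ ρ c : ℝ}
    (hμ : 0 < μ) (hρ : 0 ≤ ρ) (hdom : ∀ z ∈ S', μ * w z ≤ ρ * w' z + c)
    (h : ρ * rrCeil w' S' s' k + (k - 1) * c ≤ μ * rrFloor w S s k) :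
    RoundRobinEF1 w w' S S' s s' := by
  intro a ha b hb
  rcases k.eq_zero_or_pos with rfl | hk
  · exact Or.inl (card_eq_zero.1 (card_rrBundle hS' hb))
  obtain ⟨j, hj, hle⟩ := exists_mem_rrBundle_sum_erase_le_rrCeil hS' hb hk
  set B := (rrBundle w' S' s' b).erase j
  have hB : #B = k - 1 := by rw [card_erase_of_mem hj, card_rrBundle hS' hb]
  refine Or.inr ⟨j, hj, le_of_mul_le_mul_left ?_ hμ⟩
  calc μ * ∑ z ∈ B, w z = ∑ z ∈ B, μ * w z := mul_sum _ _ _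
    _ ≤ ∑ z ∈ B, (ρ * w' z + c) :=
        sum_le_sum fun z hz => hdom z (mem_filter.1 (mem_of_mem_erase hz)).1
    _ = ρ * ∑ z ∈ B, w' z + (k - 1) * c := by
        rw [sum_add_distrib, ← mul_sum, sum_const, hB, nsmul_eq_mul, Nat.cast_pred hk]
    _ ≤ ρ * rrCeil w' S' s' k + (k - 1) * c := by gcongr
    _ ≤ μ * rrFloor w S s k := h
    _ ≤ μ * ∑ z ∈ rrBundle w S s a, w z := by gcongr; exact rrFloor_le_sum_rrBundle hS ha

lemma RoundRobinEF1.self (hw : ∀ z, 0 ≤ w z) (hS : S.card = s * k) :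
    RoundRobinEF1 w w S S s s := fun a ha =>
  RoundRobinEF1.of_le hS hS one_pos zero_le_one (c := 0) (by simp)
    (by simpa using rrCeil_le_rrFloor hw (Nat.zero_lt_of_lt ha) hS) a ha

end EnvyFreeness

section TopSets

variable {α : Type*} {c : α → ℝ} {P : Finset α}

def IsTopSet (c : α → ℝ) (P : Finset α) : Prop :=
  ∀ p ∈ P, ∀ q ∉ P, c q ≤ c p

lemma IsTopSet.exchange [DecidableEq α] (h : IsTopSet c P) {p q : α} (hp : p ∈ P) (hq : q ∉ P)
    (hpq : c q = c p) : IsTopSet c (insert q (P.erase p)) := by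
  intro x hx y hy
  simp only [mem_insert, mem_erase, not_or, not_and] at hx hy
  have hy' : c y ≤ c p := by
    by_cases hyp : y = p
    · rw [hyp]
    · exact h p hp y (hy.2 hyp)
  have hx' : c p ≤ c x := by
    rcases hx with rfl | ⟨-, hxP⟩
    · exact hpq.ge
    · exact hpq ▸ h x hxP q hq
  exact hy'.trans hx'

lemma IsTopSet.exists_threshold [Finite α] (h : IsTopSet c P) :
    ∃ θ, (∀ p ∈ P, θ ≤ c p) ∧ ∀ q ∉ P, c q ≤ θ := by
  rcases P.eq_empty_or_nonempty with rfl | hP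
  · obtain ⟨θ, hθ⟩ := (Set.finite_range c).bddAbove
    exact ⟨θ, by simp, fun q _ => hθ (Set.mem_range_self q)⟩
  · exact ⟨P.inf' hP c, fun p hp => inf'_le c hp,
      fun q hq => (le_inf'_iff hP c).2 fun p hp => h p hp q hq⟩

lemma IsTopSet.sum_mul_le [Fintype α] [DecidableEq α] (h : IsTopSet c P) {z : α → ℝ}
    (hz₀ : ∀ j, 0 ≤ z j) (hz₁ : ∀ j, z j ≤ 1) (hz : ∑ j, z j = P.card) :
    ∑ j, c j * z j ≤ ∑ j ∈ P, c j := by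
  obtain ⟨θ, hθP, hθPc⟩ := h.exists_threshold
  have hout : ∑ j ∈ Pᶜ, c j * z j ≤ ∑ j ∈ Pᶜ, θ * z j :=
    sum_le_sum fun j hj => mul_le_mul_of_nonneg_right (hθPc j (mem_compl.1 hj)) (hz₀ j)
  have hin : ∑ j ∈ P, θ * (1 - z j) ≤ ∑ j ∈ P, c j * (1 - z j) :=
    sum_le_sum fun j hj => mul_le_mul_of_nonneg_right (hθP j hj) (sub_nonneg.2 (hz₁ j))
  have hbal : ∑ j ∈ Pᶜ, θ * z j = ∑ j ∈ P, θ * (1 - z j) := by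
    have hzc : ∑ j ∈ Pᶜ, z j = P.card - ∑ j ∈ P, z j := by
      rw [← hz, ← sum_add_sum_compl P z]
      ring
    rw [← mul_sum, ← mul_sum, sum_sub_distrib, hzc]
    simp
  calc ∑ j, c j * z j = ∑ j ∈ P, c j * z j + ∑ j ∈ Pᶜ, c j * z j := (sum_add_sum_compl _ _).symm
    _ ≤ ∑ j ∈ P, c j * z j + ∑ j ∈ P, c j * (1 - z j) := by grw [hout, hbal, hin]
    _ = ∑ j ∈ P, c j := by rw [← sum_add_distrib]; simp [mul_sub]

variable {u₀ u₁ : α → ℝ} {r : ℝ}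

lemma IsTopSet.welfare_le [Fintype α] [DecidableEq α]
    (h : IsTopSet (fun j => u₀ j - r * u₁ j) P) {z : α → ℝ} (hz₀ : ∀ j, 0 ≤ z j)
    (hz₁ : ∀ j, z j ≤ 1) (hz : ∑ j, z j = P.card) :
    ∑ j, u₀ j * z j + r * ∑ j, u₁ j * (1 - z j) ≤ ∑ j ∈ P, u₀ j + r * ∑ j ∈ Pᶜ, u₁ j := by
  have := h.sum_mul_le hz₀ hz₁ hz
  have hc := sum_add_sum_compl P u₁
  simp only [sub_mul, mul_sub, mul_one, sum_sub_distrib, ← mul_sum, mul_assoc] at this ⊢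
  linear_combination this - r * hc

/-- The new ratio `r'` is the least `(u₀ p - u₀ q) / (u₁ p - u₁ q)` over the pairs that `u₁`
ranks the other way. -/
lemma IsTopSet.exists_tight [Fintype α] (h : IsTopSet (fun j => u₀ j - r * u₁ j) P)
    (hinv : ∃ p ∈ P, ∃ q ∉ P, u₁ q < u₁ p) :
    ∃ r' ≥ r, IsTopSet (fun j => u₀ j - r' * u₁ j) P ∧
      ∃ p ∈ P, ∃ q ∉ P, u₁ q < u₁ p ∧ u₀ q - r' * u₁ q = u₀ p - r' * u₁ p := by
  classical
  let ratio : α × α → ℝ := fun pq => (u₀ pq.1 - u₀ pq.2) / (u₁ pq.1 - u₁ pq.2)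
  let W := {pq ∈ P ×ˢ Pᶜ | u₁ pq.2 < u₁ pq.1}
  have hW : W.Nonempty := by
    obtain ⟨p, hp, q, hq, hlt⟩ := hinv
    exact ⟨(p, q), by simp [W, hp, hq, hlt]⟩
  obtain ⟨⟨p, q⟩, hpq, hmin⟩ := W.exists_min_image ratio hW
  simp only [W, mem_filter, mem_product, mem_compl] at hpq hmin
  obtain ⟨⟨hp, hq⟩, hlt⟩ := hpq
  have hratio : ∀ p' ∈ P, ∀ q' ∉ P, u₁ q' < u₁ p' →
      ratio (p, q) * (u₁ p' - u₁ q') ≤ u₀ p' - u₀ q' := fun p' hp' q' hq' hlt' =>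
    (le_div_iff₀ (sub_pos.2 hlt')).1 (hmin (p', q') ⟨⟨hp', hq'⟩, hlt'⟩)
  have hr : r ≤ ratio (p, q) := (le_div_iff₀ (sub_pos.2 hlt)).2 (by linarith [h p hp q hq])
  refine ⟨ratio (p, q), hr, fun p' hp' q' hq' => ?_, p, hp, q, hq, hlt, ?_⟩
  · rcases lt_or_ge (u₁ q') (u₁ p') with hlt' | hle
    · linarith [hratio p' hp' q' hq' hlt']
    · nlinarith [h p' hp' q' hq', mul_le_mul_of_nonneg_left hle (sub_nonneg.2 hr)]
  · linarith [div_mul_cancel₀ (u₀ p - u₀ q) (sub_ne_zero.2 hlt.ne')]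

end TopSets

section TwoTypeSplit

variable {α : Type*} [Fintype α] [DecidableEq α] {u₀ u₁ : α → ℝ}

/-- Maximizing `∑ u₀`, with ties broken by minimizing `∑ u₁`, makes every pair ranked the other
way by `u₁` strictly ranked by `u₀`, hence gives a positive ratio. -/
lemma exists_isTopSet_pos_ratio (u₀ u₁ : α → ℝ) {K : ℕ} (hK : K ≤ Fintype.card α) :
    ∃ P : Finset α, P.card = K ∧ IsTopSet u₀ P ∧
      ∃ r > 0, IsTopSet (fun j => u₀ j - r * u₁ j) P := by
  obtain ⟨P, hP, hmax⟩ := (powersetCard K (univ : Finset α)).exists_max_image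
    (fun P => toLex (∑ j ∈ P, u₀ j, -∑ j ∈ P, u₁ j)) (powersetCard_nonempty.2 (by simpa using hK))
  rw [mem_powersetCard] at hP
  have hlex : ∀ p ∈ P, ∀ q ∉ P, u₀ q ≤ u₀ p ∧ (u₀ q = u₀ p → u₁ p ≤ u₁ q) := by
    intro p hp q hq
    have hq' : q ∉ P.erase p := fun h => hq (mem_of_mem_erase h)
    have := hmax (insert q (P.erase p)) (mem_powersetCard.2 ⟨subset_univ _, by
      rw [card_insert_of_notMem hq', card_erase_add_one hp, hP.2]⟩)
    rw [Prod.Lex.toLex_le_toLex', sum_insert hq', sum_insert hq', sum_erase_eq_sub hp,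
      sum_erase_eq_sub hp] at this
    exact ⟨by linarith [this.1], fun h => by linarith [this.2 (by linarith)]⟩
  have htop : IsTopSet u₀ P := fun p hp q hq => (hlex p hp q hq).1
  refine ⟨P, hP.2, htop, ?_⟩
  by_cases hinv : ∃ p ∈ P, ∃ q ∉ P, u₁ q < u₁ p
  · obtain ⟨r, -, hr, p, hp, q, hq, hlt, htight⟩ :=
      IsTopSet.exists_tight (r := 0) (by simpa [IsTopSet] using htop) hinv
    have hstrict : u₀ q < u₀ p := lt_of_le_of_ne (hlex p hp q hq).1
      fun h => absurd ((hlex p hp q hq).2 h) (not_le.2 hlt)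
    exact ⟨r, by nlinarith, hr⟩
  · push Not at hinv
    exact ⟨1, one_pos, fun p hp q hq => by linarith [htop p hp q hq, hinv p hp q hq]⟩

variable {n₀ n₁ k : ℕ} {P : Finset α} {r : ℝ}

/-- `P'` exchanges the tight pair of `IsTopSet.exists_tight`. The failure of the sufficient
condition of `RoundRobinEF1.of_le` for type `1` before the exchange is what yields it for
type `0` after the exchange. -/
lemma exists_exchange_of_not_roundRobinEF1 (hu₀ : ∀ j, 0 ≤ u₀ j) (hu₁ : ∀ j, 0 ≤ u₁ j)
    (hP : P.card = n₀ * k) (hPc : Pᶜ.card = n₁ * k) (hr : 0 < r)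
    (htop : IsTopSet (fun j => u₀ j - r * u₁ j) P) (hE : ¬ RoundRobinEF1 u₁ u₀ Pᶜ P n₁ n₀) :
    ∃ P' : Finset α, P'.card = P.card ∧ ∑ j ∈ P', u₁ j < ∑ j ∈ P, u₁ j ∧
      (∃ r > 0, IsTopSet (fun j => u₀ j - r * u₁ j) P') ∧
      RoundRobinEF1 u₀ u₁ P' P'ᶜ n₀ n₁ := by
  have hn : 0 < n₀ ∧ 0 < n₁ := by
    simp only [RoundRobinEF1, not_forall] at hE
    obtain ⟨b, hb, a, ha, -⟩ := hE
    omega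
  have hinv : ∃ p ∈ P, ∃ q ∉ P, u₁ q < u₁ p := by
    by_contra! h
    exact hE (RoundRobinEF1.of_forall_le hu₁ hPc hP fun x hx y hy => h x hx y (mem_compl.1 hy))
  obtain ⟨r', hrr', htop', p, hp, q, hq, hlt, htight⟩ := htop.exists_tight hinv
  have hr' : 0 < r' := hr.trans_le hrr'
  set θ := u₀ p - r' * u₁ p
  have hfail : r' * rrFloor u₁ Pᶜ n₁ k + (k - 1) * θ < rrCeil u₀ P n₀ k := by
    by_contra! hsuff
    refine hE (RoundRobinEF1.of_le hPc hP hr' zero_le_one (c := -θ) (fun z hz => ?_) ?_)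
    · linarith [htop' z hz q hq]
    · linarith
  set P' := insert q (P.erase p)
  have hq' : q ∉ P.erase p := fun h => hq (mem_of_mem_erase h)
  have hP' : P'.card = P.card := by rw [card_insert_of_notMem hq', card_erase_add_one hp]
  have hPc' : P'ᶜ.card = Pᶜ.card := by rw [card_compl, card_compl, hP']
  have hdiff : (P \ P').card ≤ 1 := (card_le_card (t := {p}) fun x hx => by
    simp only [P', mem_sdiff, mem_insert, mem_erase, mem_singleton] at hx ⊢
    tauto).trans (card_singleton p).le
  have htop'' := htop'.exchange hp hq htight
  refine ⟨P', hP', ?_, ⟨r', hr', htop''⟩, RoundRobinEF1.of_le (hP' ▸ hP) (hPc' ▸ hPc) one_pos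
    hr'.le (c := θ) (fun z hz => ?_) ?_⟩
  · rw [sum_insert hq', sum_erase_eq_sub hp]
    linarith
  · linarith [htop'' q (mem_insert_self _ _) z (mem_compl.1 hz)]
  · have h₀ := rrCeil_le_rrFloor_of_card_sdiff_le_one hu₀ hn.1 hP hP' hdiff
    have h₁ := rrCeil_le_rrFloor_of_card_sdiff_le_one hu₁ hn.2 (hPc' ▸ hPc) hPc'.symm
      (by rwa [compl_sdiff_compl])
    have := mul_le_mul_of_nonneg_left h₁ hr'.le
    linarith

theorem exists_isTopSet_roundRobinEF1 (hu₀ : ∀ j, 0 ≤ u₀ j) (hu₁ : ∀ j, 0 ≤ u₁ j)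
    (hcard : n₀ * k + n₁ * k = Fintype.card α) :
    ∃ P : Finset α, P.card = n₀ * k ∧ (∃ r > 0, IsTopSet (fun j => u₀ j - r * u₁ j) P) ∧
      RoundRobinEF1 u₀ u₁ P Pᶜ n₀ n₁ ∧ RoundRobinEF1 u₁ u₀ Pᶜ P n₁ n₀ := by
  classical
  have hcompl : ∀ P : Finset α, P.card = n₀ * k → Pᶜ.card = n₁ * k := fun P hP => by
    rw [card_compl, hP]
    omega
  let F : Finset (Finset α) := {P | P.card = n₀ * k ∧
    (∃ r > 0, IsTopSet (fun j => u₀ j - r * u₁ j) P) ∧ RoundRobinEF1 u₀ u₁ P Pᶜ n₀ n₁}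
  have hF : F.Nonempty := by
    obtain ⟨P, hP, htop, hpos⟩ := exists_isTopSet_pos_ratio u₀ u₁ (K := n₀ * k) (by omega)
    exact ⟨P, mem_filter.2 ⟨mem_univ _, hP, hpos, RoundRobinEF1.of_forall_le hu₀ hP
      (hcompl P hP) fun x hx y hy => htop y hy x (mem_compl.1 hx)⟩⟩
  obtain ⟨P, hPF, hmin⟩ := F.exists_min_image (fun P => ∑ j ∈ P, u₁ j) hF
  obtain ⟨hP, ⟨r, hr, htop⟩, hE⟩ := (mem_filter.1 hPF).2
  refine ⟨P, hP, ⟨r, hr, htop⟩, hE, by_contra fun hE' => ?_⟩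
  obtain ⟨P', hP', hlt, hpos', hE''⟩ :=
    exists_exchange_of_not_roundRobinEF1 hu₀ hu₁ hP (hcompl P hP) hr htop hE'
  exact (hmin P' (mem_filter.2 ⟨mem_univ _, hP' ▸ hP, hpos', hE''⟩)).not_gt hlt

end TwoTypeSplit

section TypeAllocation

variable {n m k : ℕ} {ι : Type*} [DecidableEq ι]

noncomputable def typeCount (t : Fin n → ι) (τ : ι) : ℕ := Fintype.card {i // t i = τ}

lemma sum_typeCount [Fintype ι] (t : Fin n → ι) : ∑ τ, typeCount t τ = n := by
  simp only [typeCount, Fintype.card_eq_sum_ones]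
  rw [Fintype.sum_fiberwise t fun _ => 1]
  simp

/-- The agents of type `τ`, enumerated in some fixed order, share the goods `S τ` by round
robin on their common valuation `u τ`. -/
noncomputable def typeAllocation (t : Fin n → ι) (u : ι → Fin m → ℝ) (S : ι → Finset (Fin m))
    (i : Fin n) : Finset (Fin m) :=
  rrBundle (u (t i)) (S (t i)) (typeCount t (t i)) (Fintype.equivFin {i' // t i' = t i} ⟨i, rfl⟩)

variable {t : Fin n → ι} {u : ι → Fin m → ℝ} {S : ι → Finset (Fin m)}

lemma typeAllocation_eq {i : Fin n} {τ : ι} (h : t i = τ) :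
    typeAllocation t u S i =
      rrBundle (u τ) (S τ) (typeCount t τ) (Fintype.equivFin {i' // t i' = τ} ⟨i, h⟩) := by
  subst h
  rfl

lemma sum_typeAllocation {M : Type*} [AddCommMonoid M]
    (hS : ∀ τ, (S τ).card = typeCount t τ * k) (τ : ι) (f : Fin m → M) :
    ∑ i : {i // t i = τ}, ∑ j ∈ typeAllocation t u S i, f j = ∑ j ∈ S τ, f j := by
  let e := Fintype.equivFin {i // t i = τ}
  calc ∑ i : {i // t i = τ}, ∑ j ∈ typeAllocation t u S i, f j
      = ∑ i : {i // t i = τ}, ∑ j ∈ rrBundle (u τ) (S τ) (typeCount t τ) (e i), f j :=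
        sum_congr rfl fun i _ => by rw [typeAllocation_eq i.2]
    _ = ∑ a ∈ range (typeCount t τ), ∑ j ∈ rrBundle (u τ) (S τ) (typeCount t τ) a, f j := by
        rw [← Fin.sum_univ_eq_sum_range (fun a => ∑ j ∈ rrBundle _ _ _ a, f j)]
        exact e.sum_comp fun a => ∑ j ∈ rrBundle (u τ) (S τ) (typeCount t τ) a, f j
    _ = ∑ j ∈ S τ, f j := sum_sum_rrBundle (hS τ) f

lemma isBalanced_typeAllocation (hcover : ∀ j, ∃! τ, j ∈ S τ)
    (hS : ∀ τ, (S τ).card = typeCount t τ * k) : IsBalanced n m k (typeAllocation t u S) := by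
  refine ⟨fun j => ?_, fun i => card_rrBundle (hS _) (Fin.isLt _)⟩
  obtain ⟨τ, hj, huniq⟩ := hcover j
  let e := Fintype.equivFin {i // t i = τ}
  have hpos : 0 < typeCount t τ := Nat.pos_of_ne_zero fun h => by
    have := hS τ
    rw [h, zero_mul, card_eq_zero] at this
    simp [this] at hj
  let a : Fin (Fintype.card {i // t i = τ}) :=
    ⟨valueRank (u τ) (S τ) j % typeCount t τ, Nat.mod_lt _ hpos⟩
  refine ⟨e.symm a, ?_, fun i hi => ?_⟩
  · show j ∈ typeAllocation t u S _
    rw [typeAllocation_eq (e.symm a).2]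
    simp [rrBundle, hj, a, e]
  · change j ∈ typeAllocation t u S i at hi
    have hτ : t i = τ := huniq _ (mem_filter.1 hi).1
    rw [typeAllocation_eq hτ] at hi
    have : e ⟨i, hτ⟩ = a := Fin.ext (mem_filter.1 hi).2.symm
    rw [← this, e.symm_apply_apply]

lemma isEF1_typeAllocation {v : Fin n → Fin m → ℝ} (hv : ∀ i, v i = u (t i))
    (h : ∀ τ τ', RoundRobinEF1 (u τ) (u τ') (S τ) (S τ') (typeCount t τ) (typeCount t τ')) :
    IsEF1 n m v (typeAllocation t u S) := fun i i' => by
  rw [hv]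
  exact h (t i) (t i') _ (Fin.isLt _) _ (Fin.isLt _)

end TypeAllocation

section ParetoOptimality

variable {n m k : ℕ}

lemma isFPO_of_weighted_welfare_le {v : Fin n → Fin m → ℝ} {A : Fin n → Finset (Fin m)}
    (c : Fin n → ℝ) (hc : ∀ i, 0 < c i)
    (h : ∀ x, IsFracBalanced n m k x →
      ∑ i, c i * ∑ j, v i j * x i j ≤ ∑ i, c i * ∑ j ∈ A i, v i j) :
    IsFPO n m k v A := by
  rintro ⟨x, hx, hle, i, hlt⟩
  exact (h x hx).not_gt <| sum_lt_sum (fun i _ => mul_le_mul_of_nonneg_left (hle i) (hc i).le)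
    ⟨i, mem_univ _, mul_lt_mul_of_pos_left hlt (hc i)⟩

variable {ι : Type*} [Fintype ι] [DecidableEq ι] {t : Fin n → ι} {u : ι → Fin m → ℝ}

lemma sum_weight_mul_sum_frac (c : ι → ℝ) (x : Fin n → Fin m → ℝ) :
    ∑ i, c (t i) * ∑ j, u (t i) j * x i j =
      ∑ τ, c τ * ∑ j, u τ j * ∑ i : {i // t i = τ}, x i j := by
  rw [← Fintype.sum_fiberwise t]
  refine sum_congr rfl fun τ _ => ?_
  calc ∑ i : {i // t i = τ}, c (t i) * ∑ j, u (t i) j * x i j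
      = ∑ i : {i // t i = τ}, c τ * ∑ j, u τ j * x i j := sum_congr rfl fun i _ => by rw [i.2]
    _ = _ := by simp_rw [mul_sum]; rw [sum_comm]

lemma sum_weight_mul_sum_typeAllocation {S : ι → Finset (Fin m)}
    (hS : ∀ τ, (S τ).card = typeCount t τ * k) (c : ι → ℝ) :
    ∑ i, c (t i) * ∑ j ∈ typeAllocation t u S i, u (t i) j =
      ∑ τ, c τ * ∑ j ∈ S τ, u τ j := by
  rw [← Fintype.sum_fiberwise t]
  refine sum_congr rfl fun τ _ => ?_
  rw [← sum_typeAllocation (u := u) hS τ, mul_sum]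
  exact sum_congr rfl fun i _ => by rw [i.2]

/-- With weight `1` on type `0` and `r` on type `1`, the weighted welfare of a fractional
allocation only depends on the fraction `z` of each good that goes to type `0`. -/
lemma isFPO_typeAllocation_fin_two (t : Fin n → Fin 2) {u : Fin 2 → Fin m → ℝ}
    {v : Fin n → Fin m → ℝ} (hv : ∀ i, v i = u (t i)) {P : Finset (Fin m)}
    (hP : P.card = typeCount t 0 * k) (hPc : Pᶜ.card = typeCount t 1 * k) {r : ℝ} (hr : 0 < r)
    (htop : IsTopSet (fun j => u 0 j - r * u 1 j) P) :
    IsFPO n m k v (typeAllocation t u ![P, Pᶜ]) := by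
  obtain rfl : v = fun i => u (t i) := funext hv
  have hS : ∀ τ, (![P, Pᶜ] τ).card = typeCount t τ * k := Fin.forall_fin_two.2 ⟨hP, hPc⟩
  have hc : ∀ τ, 0 < ![1, r] τ := Fin.forall_fin_two.2 ⟨one_pos, hr⟩
  refine isFPO_of_weighted_welfare_le (fun i => ![1, r] (t i)) (fun i => hc (t i))
    fun x ⟨hx₀, hrow, hcol⟩ => ?_
  rw [sum_weight_mul_sum_frac, sum_weight_mul_sum_typeAllocation hS, Fin.sum_univ_two,
    Fin.sum_univ_two]
  set z : Fin m → ℝ := fun j => ∑ i : {i // t i = 0}, x i j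
  have hz : ∀ j, ∑ i : {i // t i = 1}, x i j = 1 - z j := fun j => by
    have := Fintype.sum_fiberwise t (x · j)
    rw [Fin.sum_univ_two, hcol] at this
    linarith
  have hz₀ : ∀ j, 0 ≤ z j := fun j => sum_nonneg fun i _ => hx₀ i j
  have hz₁ : ∀ j, z j ≤ 1 := fun j => by
    linarith [hz j, sum_nonneg (s := (univ : Finset {i // t i = 1})) fun i _ => hx₀ i j]
  have hzs : ∑ j, z j = P.card := by
    simp only [z]
    rw [sum_comm]
    simp [hrow, hP, typeCount]
  simp only [hz, Matrix.cons_val_zero, Matrix.cons_val_one, one_mul]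
  exact htop.welfare_le hz₀ hz₁ hzs

end ParetoOptimality

theorem stmt19_general (n m k : ℕ) (hm : m = n * k)
    (t : Fin n → Fin 2) (u : Fin 2 → Fin m → ℝ) (hu : ∀ s j, 0 ≤ u s j)
    (v : Fin n → Fin m → ℝ) (hv : ∀ i, v i = u (t i)) :
    ∃ A : Fin n → Finset (Fin m),
      IsBalanced n m k A ∧ IsEF1 n m v A ∧ IsFPO n m k v A := by
  have hcard : typeCount t 0 * k + typeCount t 1 * k = Fintype.card (Fin m) := by
    rw [← add_mul, ← Fin.sum_univ_two (typeCount t), sum_typeCount, Fintype.card_fin, hm]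
  obtain ⟨P, hP, ⟨r, hr, htop⟩, hE₀₁, hE₁₀⟩ :=
    exists_isTopSet_roundRobinEF1 (hu 0) (hu 1) hcard
  have hPc : Pᶜ.card = typeCount t 1 * k := by
    rw [card_compl, hP]
    omega
  refine ⟨typeAllocation t u ![P, Pᶜ], isBalanced_typeAllocation (fun j => ?_)
    (Fin.forall_fin_two.2 ⟨hP, hPc⟩), isEF1_typeAllocation hv ?_,
    isFPO_typeAllocation_fin_two t hv hP hPc hr htop⟩
  · by_cases hj : j ∈ P
    · exact ⟨0, hj, by simp [Fin.forall_fin_two, hj]⟩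
    · exact ⟨1, by simpa using hj, by simp [Fin.forall_fin_two, hj]⟩
  · simp only [Fin.forall_fin_two]
    exact ⟨⟨RoundRobinEF1.self (hu 0) hP, hE₀₁⟩, hE₁₀, RoundRobinEF1.self (hu 1) hPc⟩

/-- With at most two distinct valuation types and `m = n·k`, there exists a
balanced allocation that is both EF1 and fPO. -/
theorem stmt19 (n m k : ℕ) (hn : 0 < n) (hm : m = n * k)
    (t : Fin n → Fin 2) (u : Fin 2 → Fin m → ℝ) (hu : ∀ s j, 0 ≤ u s j)
    (v : Fin n → Fin m → ℝ) (hv : ∀ i, v i = u (t i)) :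
    ∃ A : Fin n → Finset (Fin m),
      IsBalanced n m k A ∧ IsEF1 n m v A ∧ IsFPO n m k v A :=
  stmt19_general n m k hm t u hu v hv
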